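/- Fix n ≥ 1 experts and a message profile m : Fin n → ℝ, and consider the pivotal mechanism with no ex-post rewards. If expert i is strictly pivotal, i.e., the allocation at the full sum ∑_k m_k differs from the allocation at s_i = ∑_{j≠i} m_j alone and s_i ≠ 0, and expert j is non-pivotal, i.e., the allocation at the full sum equals the allocation at s_j = ∑_{k≠j} m_k, then t_i < 0 = t_j. In particular, the pivotal expert's total transfer is strictly smaller than the non-pivotal expert's total transfer regardless of the realized outcome, so the Weak Accountability requirement that the pivotal expert be weakly better off on a positive outcome fails for the pivotal mechanism. -/

import Mathlib

/-- The pivotal (VCG) transfer for message `m` against opponent sum `s`. -/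
noncomputable def vcg (m s : ℝ) : ℝ :=
  if (0 ≤ m + s ∧ s < 0) ∨ (m + s < 0 ∧ 0 ≤ s) then -|s| else 0

/-- Opponent sum of expert `i`: the sum of all messages except `i`'s. -/
noncomputable def sOpp {n : ℕ} (m : Fin n → ℝ) (i : Fin n) : ℝ :=
  ∑ j ∈ Finset.univ.erase i, m j

theorem add_sOpp {n : ℕ} (m : Fin n → ℝ) (i : Fin n) : m i + sOpp m i = ∑ k, m k :=
  Finset.add_sum_erase _ _ (Finset.mem_univ i)

theorem vcg_eq_zero_of_iff {m s : ℝ} (h : 0 ≤ m + s ↔ 0 ≤ s) : vcg m s = 0 := by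
  rw [vcg, if_neg]
  rintro (⟨h₁, h₂⟩ | ⟨h₁, h₂⟩)
  · exact h₂.not_ge (h.mp h₁)
  · exact h₁.not_ge (h.mpr h₂)

theorem vcg_eq_neg_abs_of_not_iff {m s : ℝ} (h : ¬(0 ≤ m + s ↔ 0 ≤ s)) : vcg m s = -|s| := by
  rw [vcg, if_pos]
  rcases lt_or_ge s 0 with hs | hs
  · exact .inl ⟨by_contra fun h' => h (iff_of_false h' hs.not_ge), hs⟩
  · exact .inr ⟨by_contra fun h' => h (iff_of_true (not_lt.mp h') hs), hs⟩

theorem vcg_neg_of_not_iff {m s : ℝ} (h : ¬(0 ≤ m + s ↔ 0 ≤ s)) (hs : s ≠ 0) : vcg m s < 0 := by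
  rw [vcg_eq_neg_abs_of_not_iff h, neg_neg_iff_pos]
  exact abs_pos.mpr hs

theorem pivotal_mechanism_not_accountable_general (n : ℕ)
    (m : Fin n → ℝ) (i j : Fin n)
    (hpiv : ¬ ((0 ≤ ∑ k, m k) ↔ (0 ≤ sOpp m i))) (hsi : sOpp m i ≠ 0)
    (hnonpiv : (0 ≤ ∑ k, m k) ↔ (0 ≤ sOpp m j)) :
    vcg (m i) (sOpp m i) < 0 ∧ vcg (m j) (sOpp m j) = 0 := by
  rw [← add_sOpp m i] at hpiv
  rw [← add_sOpp m j] at hnonpiv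
  exact ⟨vcg_neg_of_not_iff hpiv hsi, vcg_eq_zero_of_iff hnonpiv⟩

/-- The pure pivotal mechanism (no ex-post rewards) fails Weak
Accountability. If expert `i` is strictly pivotal (the allocation at the full
sum differs from the allocation at `s_i`, and `s_i ≠ 0`) and expert `j` is
non-pivotal, then `t_i < 0 = t_j`: the pivotal expert's total transfer is
strictly smaller regardless of the realized outcome. -/
theorem pivotal_mechanism_not_accountable (n : ℕ) (hn : 1 ≤ n)
    (m : Fin n → ℝ) (i j : Fin n)
    (hpiv : ¬ ((0 ≤ ∑ k, m k) ↔ (0 ≤ sOpp m i))) (hsi : sOpp m i ≠ 0)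
    (hnonpiv : (0 ≤ ∑ k, m k) ↔ (0 ≤ sOpp m j)) :
    vcg (m i) (sOpp m i) < 0 ∧ vcg (m j) (sOpp m j) = 0 :=
  pivotal_mechanism_not_accountable_general n m i j hpiv hsi hnonpiv
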